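/- arXiv:1707.01568 — 2 statements merged into one kernel-verified Lean document; each statement's English description precedes it below -/
import Mathlib

section
/- Let N_p be a weight sequence satisfying (M.1) and let N be its associated function. Suppose χ is an integrable function on ℝ^d whose Fourier transform χ̂ satisfies |χ̂(t)| ≤ C e^{−2N(2|t|/h)} for all t ∈ ℝ^d for some constants C, h > 0, and define θ_ε(x) = ε^{−d} F^{−1}(ψ)(x/ε) χ(x/r_ε), where ψ is a bounded measurable function with 0 ≤ ψ ≤ 1 supported in B(0,2), and r_ε > 0. Then for every ε and every ξ ∈ ℝ^d with |ξ| ≥ 4/ε, |θ̂_ε(ξ)| ≤ C′ e^{−N(r_ε|ξ|/h)}, where C′ = C (2π)^{−d} ∫_{ℝ^d} e^{−N(2|t|/h)} dt. -/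
/-!
Writing `F⁻¹(ψ)(x/ε)` as an integral and applying Fubini gives
`θ̂_ε(ξ) = r^d ε^{-d} (2π)^{-d} ∫ ψ(η) χ̂(r(ξ - η/ε)) dη`. On the support of `ψ` we have
`|η| < 2`, so `|ξ| ≥ 4/ε` forces `2|r(ξ - η/ε)| ≥ r|ξ|`. Since `N` is nondecreasing, one of the two
factors `e^{-N(2|t|/h)}` in the bound for `χ̂(t)` is then at most `e^{-N(r|ξ|/h)}`, while the other
is integrable because `t^p e^{-N(t)} ≤ M_p`; the substitution `t = r(ξ - η/ε)` produces the
constant.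
-/

open Filter Set MeasureTheory

noncomputable section

abbrev Rd (d : ℕ) := EuclideanSpace ℝ (Fin d)

/-- Fourier transform with convention `F(φ)(ξ) = ∫ φ(x) e^{-i x·ξ} dx`. -/
def FT {d : ℕ} (f : Rd d → ℂ) (ξ : Rd d) : ℂ :=
  ∫ x : Rd d, f x * Complex.exp (-(Complex.I * ((inner ℝ x ξ : ℝ) : ℂ)))

/-- Inverse Fourier transform `F⁻¹(φ)(x) = (2π)^{-d} ∫ φ(ξ) e^{i x·ξ} dξ`. -/
def invFT {d : ℕ} (f : Rd d → ℂ) (x : Rd d) : ℂ :=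
  (((2 * Real.pi) ^ d : ℝ)⁻¹ : ℂ) * ∫ ξ : Rd d, f ξ * Complex.exp (Complex.I * ((inner ℝ x ξ : ℝ) : ℂ))

def WeightSeq (Mp : ℕ → ℝ) : Prop := Mp 0 = 1 ∧ ∀ p, 0 < Mp p

def CondM1 (Mp : ℕ → ℝ) : Prop := ∀ p : ℕ, 1 ≤ p → (Mp p) ^ 2 ≤ Mp (p - 1) * Mp (p + 1)

def assocFn (Mp : ℕ → ℝ) (t : ℝ) : EReal :=
  if t ≤ 0 then 0 else ⨆ p : ℕ, ((Real.log (t ^ p / Mp p) : ℝ) : EReal)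

theorem integrable_of_norm_le_of_support_subset {α F : Type*} [MeasurableSpace α]
    [NormedAddCommGroup F] {μ : Measure α} {f : α → F} (hf : AEStronglyMeasurable f μ)
    {s : Set α} (hs : μ s ≠ ⊤) (hsupp : Function.support f ⊆ s) {M : ℝ} (hM : ∀ x, ‖f x‖ ≤ M) :
    Integrable f μ :=
  (integrableOn_iff_integrable_of_support_subset hsupp).1
    (Measure.integrableOn_of_bounded hs hf (ae_of_all _ hM))

theorem integral_comp_smul_sub_smul {E F : Type*} [NormedAddCommGroup E] [NormedSpace ℝ E]
    [FiniteDimensional ℝ E] [MeasurableSpace E] [BorelSpace E] [NormedAddCommGroup F]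
    [NormedSpace ℝ F] (μ : Measure E) [μ.IsAddHaarMeasure] (f : E → F) (a b : ℝ) (ξ : E) :
    ∫ x, f (a • (ξ - b • x)) ∂μ = |((a * b) ^ Module.finrank ℝ E)⁻¹| • ∫ x, f x ∂μ := by
  rw [Measure.integral_comp_smul μ (fun y => f (a • (ξ - y))),
    integral_sub_left_eq_self (fun y => f (a • y)), Measure.integral_comp_smul, smul_smul,
    ← abs_mul, ← mul_inv, ← mul_pow, mul_comm b]

theorem norm_le_two_mul_norm_sub_inv_smul {E : Type*} [NormedAddCommGroup E] [NormedSpace ℝ E]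
    {ε : ℝ} (hε : 0 < ε) {ξ η : E} (hξ : 4 / ε ≤ ‖ξ‖) (hη : ‖η‖ ≤ 2) :
    ‖ξ‖ ≤ 2 * ‖ξ - ε⁻¹ • η‖ := by
  have hsmall : ‖ε⁻¹ • η‖ ≤ ‖ξ‖ / 2 := by
    rw [norm_smul, Real.norm_of_nonneg (inv_nonneg.2 hε.le)]
    calc ε⁻¹ * ‖η‖ ≤ ε⁻¹ * 2 := by gcongr
      _ = 4 / ε / 2 := by ring
      _ ≤ ‖ξ‖ / 2 := by gcongr
  linarith [norm_sub_norm_le ξ (ε⁻¹ • η)]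

def IsAssocFn (Mp : ℕ → ℝ) (N : ℝ → ℝ) : Prop := ∀ t, 0 ≤ t → (N t : EReal) = assocFn Mp t

theorem isAssocFn_of_pos {Mp : ℕ → ℝ} {N : ℝ → ℝ} (h0 : N 0 = 0)
    (hpos : ∀ t, 0 < t → (N t : EReal) = assocFn Mp t) : IsAssocFn Mp N := by
  intro t ht
  rcases ht.eq_or_lt with rfl | ht
  · simp [h0, assocFn]
  · exact hpos t ht

section AssocFn

variable {Mp : ℕ → ℝ}

theorem log_le_assocFn {t : ℝ} (ht : 0 < t) (p : ℕ) :
    ((Real.log (t ^ p / Mp p) : ℝ) : EReal) ≤ assocFn Mp t := by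
  rw [assocFn, if_neg ht.not_ge]
  exact le_iSup (fun p : ℕ => ((Real.log (t ^ p / Mp p) : ℝ) : EReal)) p

theorem assocFn_nonneg (hM0 : Mp 0 = 1) (t : ℝ) : 0 ≤ assocFn Mp t := by
  rcases le_or_gt t 0 with ht | ht
  · simp [assocFn, ht]
  · simpa [hM0] using log_le_assocFn (Mp := Mp) ht 0

theorem assocFn_monotone (hM : WeightSeq Mp) : Monotone (assocFn Mp) := by
  intro s t hst
  rcases le_or_gt s 0 with hs | hs
  · simpa [assocFn, hs] using assocFn_nonneg hM.1 t
  rw [assocFn, assocFn, if_neg hs.not_ge, if_neg (hs.trans_le hst).not_ge]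
  refine iSup_mono fun p => EReal.coe_le_coe_iff.2 ?_
  exact Real.log_le_log (div_pos (pow_pos hs p) (hM.2 p))
    (div_le_div_of_nonneg_right (pow_le_pow_left₀ hs.le hst p) (hM.2 p).le)

theorem measurable_assocFn : Measurable (assocFn Mp) := by
  refine Measurable.ite measurableSet_Iic measurable_const (Measurable.iSup fun p => ?_)
  exact (Real.measurable_log.comp ((measurable_id.pow_const p).div_const _)).coe_real_ereal

end AssocFn

namespace IsAssocFn

variable {Mp : ℕ → ℝ} {N : ℝ → ℝ}

theorem monotoneOn (hN : IsAssocFn Mp N) (hM : WeightSeq Mp) : MonotoneOn N (Ici 0) :=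
  fun s hs t ht hst => EReal.coe_le_coe_iff.1 <| by
    rw [hN s hs, hN t ht]; exact assocFn_monotone hM hst

theorem pow_mul_exp_neg_le (hN : IsAssocFn Mp N) (hM : WeightSeq Mp) {t : ℝ} (ht : 0 ≤ t)
    (p : ℕ) : t ^ p * Real.exp (-N t) ≤ Mp p := by
  rcases ht.eq_or_lt with rfl | ht
  · have hN0 : N 0 = 0 := by simpa [assocFn] using hN 0 le_rfl
    rcases p with _ | p
    · simp [hN0, hM.1]
    · simpa [hN0] using (hM.2 _).le
  have hlog : Real.log (t ^ p / Mp p) ≤ N t := by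
    exact_mod_cast (log_le_assocFn ht p).trans_eq (hN t ht.le).symm
  have hexp : t ^ p / Mp p ≤ Real.exp (N t) :=
    (Real.log_le_iff_le_exp (div_pos (pow_pos ht p) (hM.2 p))).1 hlog
  rw [div_le_iff₀ (hM.2 p)] at hexp
  calc t ^ p * Real.exp (-N t) ≤ Real.exp (N t) * Mp p * Real.exp (-N t) := by gcongr
    _ = Mp p := by
      rw [mul_comm, ← mul_assoc, ← Real.exp_add, neg_add_cancel, Real.exp_zero, one_mul]

theorem measurable_comp (hN : IsAssocFn Mp N) {α : Type*} [MeasurableSpace α] {g : α → ℝ}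
    (hg : Measurable g) (hg0 : ∀ x, 0 ≤ g x) : Measurable fun x => N (g x) := by
  have hNg : (fun x => N (g x)) = fun x => (assocFn Mp (g x)).toReal := by
    ext x; rw [← hN _ (hg0 x), EReal.toReal_coe]
  rw [hNg]
  exact (measurable_assocFn.comp hg).ereal_toReal

theorem integrable_exp_neg_norm (hN : IsAssocFn Mp N) (hM : WeightSeq Mp) {E : Type*}
    [NormedAddCommGroup E] [NormedSpace ℝ E] [FiniteDimensional ℝ E] [MeasurableSpace E]
    [BorelSpace E] (μ : Measure E) [μ.IsAddHaarMeasure] {c : ℝ} (hc : 0 < c) :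
    Integrable (fun x : E => Real.exp (-N (c * ‖x‖))) μ := by
  have hbound : ∀ (p : ℕ) (x : E), ‖x‖ ^ p * ‖Real.exp (-N (c * ‖x‖))‖ ≤ Mp p / c ^ p := by
    intro p x
    rw [Real.norm_of_nonneg (Real.exp_nonneg _), le_div_iff₀ (by positivity), mul_right_comm,
      ← mul_pow, mul_comm ‖x‖]
    exact hN.pow_mul_exp_neg_le hM (by positivity) p
  have hmeas : Measurable fun x : E => Real.exp (-N (c * ‖x‖)) :=
    (hN.measurable_comp (measurable_norm.const_mul c) fun x => by positivity).neg.exp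
  simpa using integrable_of_le_of_pow_mul_le (k := 0) (fun x => by simpa using hbound 0 x)
    (hbound _) hmeas.aestronglyMeasurable

end IsAssocFn

section Fourier

variable {d : ℕ}

theorem FT_const_mul (c : ℂ) (f : Rd d → ℂ) (ξ : Rd d) :
    FT (fun x => c * f x) ξ = c * FT f ξ := by
  simp only [FT, mul_assoc, integral_const_mul]

theorem FT_comp_inv_smul (g : Rd d → ℂ) {r : ℝ} (hr : r ≠ 0) (ξ : Rd d) :
    FT (fun x => g (r⁻¹ • x)) ξ = ((|r ^ d| : ℝ) : ℂ) * FT g (r • ξ) := by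
  have hinner : ∀ x : Rd d, inner ℝ x ξ = inner ℝ (r⁻¹ • x) (r • ξ) := fun x => by
    rw [real_inner_smul_left, real_inner_smul_right, inv_mul_cancel_left₀ hr]
  simp_rw [FT, hinner]
  rw [Measure.integral_comp_inv_smul (μ := volume)
    (fun y => g y * Complex.exp (-(Complex.I * ((inner ℝ y (r • ξ) : ℝ) : ℂ)))),
    finrank_euclideanSpace_fin, Complex.real_smul]

/-- Fubini, after merging the two phases into `e^{-i⟨x, ξ - a η⟩}`. -/
theorem FT_invFT_comp_smul_mul {ψ g : Rd d → ℂ} (hψ : Integrable ψ) (hg : Integrable g)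
    (a : ℝ) (ξ : Rd d) :
    FT (fun x => invFT ψ (a • x) * g x) ξ =
      (((2 * Real.pi) ^ d : ℝ)⁻¹ : ℂ) * ∫ η, ψ η * FT g (ξ - a • η) := by
  set K : Rd d → Rd d → ℂ := fun x ζ => Complex.exp (-(Complex.I * ((inner ℝ x ζ : ℝ) : ℂ)))
  have hK : ∀ x ζ, ‖K x ζ‖ = 1 := fun x ζ => by
    rw [Complex.norm_exp]; simp
  have hphase : ∀ x η, Complex.exp (Complex.I * ((inner ℝ (a • x) η : ℝ) : ℂ)) * K x ξ =
      K x (ξ - a • η) := fun x η => by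
    simp only [K, ← Complex.exp_add, real_inner_smul_left, inner_sub_right, real_inner_smul_right]
    push_cast; ring_nf
  have hint : Integrable (Function.uncurry fun x η => ψ η * (g x * K x (ξ - a • η)))
      (volume.prod volume) := by
    refine (hg.norm.mul_prod hψ.norm).mono' ?_ (ae_of_all _ fun z => ?_)
    · exact hψ.1.comp_snd.mul (hg.1.comp_fst.mul (by fun_prop : Continuous _).aestronglyMeasurable)
    · simp [Function.uncurry, hK, mul_comm]
  calc FT (fun x => invFT ψ (a • x) * g x) ξ
      = (((2 * Real.pi) ^ d : ℝ)⁻¹ : ℂ) *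
          ∫ x, ∫ η, ψ η * (g x * K x (ξ - a • η)) := by
        simp_rw [FT, invFT, ← integral_const_mul, ← integral_mul_const, ← hphase]
        congr 1; ext x; congr 1; ext η; ring
    _ = _ := by
        rw [integral_integral_swap hint]
        simp_rw [integral_const_mul]
        rfl

def theta (ψ χ : Rd d → ℂ) (ε r : ℝ) : Rd d → ℂ :=
  fun x => ((ε ^ d : ℝ)⁻¹ : ℂ) * invFT ψ (ε⁻¹ • x) * χ (r⁻¹ • x)

theorem FT_theta {ψ χ : Rd d → ℂ} (hψ : Integrable ψ) (hχ : Integrable χ) (ε : ℝ) {r : ℝ}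
    (hr : r ≠ 0) (ξ : Rd d) :
    FT (theta ψ χ ε r) ξ = ((|r ^ d| / (ε ^ d * (2 * Real.pi) ^ d) : ℝ) : ℂ) *
      ∫ η, ψ η * FT χ (r • (ξ - ε⁻¹ • η)) := by
  unfold theta
  simp_rw [mul_assoc, FT_const_mul, FT_invFT_comp_smul_mul hψ (hχ.comp_smul (inv_ne_zero hr)),
    FT_comp_inv_smul χ hr, mul_left_comm _ (((|r ^ d| : ℝ)) : ℂ), integral_const_mul]
  push_cast; ring

end Fourier

theorem norm_mul_comp_smul_sub_le {E : Type*} [NormedAddCommGroup E] [NormedSpace ℝ E]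
    {N : ℝ → ℝ} (hN : MonotoneOn N (Ici 0)) {u : E → ℂ} {C h : ℝ} (hC : 0 ≤ C) (hh : 0 < h)
    (hu : ∀ t, ‖u t‖ ≤ C * Real.exp (-(2 * N (2 * ‖t‖ / h)))) {ψ : E → ℂ} (hψ1 : ∀ η, ‖ψ η‖ ≤ 1)
    (hψsupp : ∀ η, ψ η ≠ 0 → ‖η‖ ≤ 2) {ε r : ℝ} (hε : 0 < ε) (hr : 0 < r) {ξ : E}
    (hξ : 4 / ε ≤ ‖ξ‖) (η : E) :
    ‖ψ η * u (r • (ξ - ε⁻¹ • η))‖ ≤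
      C * Real.exp (-N (r * ‖ξ‖ / h)) * Real.exp (-N (2 * ‖r • (ξ - ε⁻¹ • η)‖ / h)) := by
  by_cases hη : ψ η = 0
  · simp only [hη, zero_mul, norm_zero]; positivity
  set t := r • (ξ - ε⁻¹ • η)
  have hfar : r * ‖ξ‖ ≤ 2 * ‖t‖ := by
    rw [norm_smul, Real.norm_of_nonneg hr.le, mul_left_comm]
    exact mul_le_mul_of_nonneg_left (norm_le_two_mul_norm_sub_inv_smul hε hξ (hψsupp η hη)) hr.le
  have hmono : N (r * ‖ξ‖ / h) ≤ N (2 * ‖t‖ / h) :=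
    hN (mem_Ici.2 (by positivity)) (mem_Ici.2 (by positivity)) (by gcongr)
  calc ‖ψ η * u t‖ ≤ ‖u t‖ := by rw [norm_mul]; exact mul_le_of_le_one_left (norm_nonneg _) (hψ1 η)
    _ ≤ C * Real.exp (-(2 * N (2 * ‖t‖ / h))) := hu t
    _ ≤ C * Real.exp (-N (r * ‖ξ‖ / h) + -N (2 * ‖t‖ / h)) := by gcongr; linarith
    _ = _ := by rw [Real.exp_add, mul_assoc]

theorem fourier_theta_highfreq_decay_general (d : ℕ) (Np : ℕ → ℝ) (hW : WeightSeq Np)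
    (N : ℝ → ℝ) (hN0 : N 0 = 0)
    (hN : ∀ t : ℝ, 0 < t → (N t : EReal) = assocFn Np t)
    (χ : Rd d → ℂ) (hχint : Integrable χ)
    (ψ : Rd d → ℝ) (hψm : Measurable ψ)
    (hψ01 : ∀ x, 0 ≤ ψ x ∧ ψ x ≤ 1)
    (hψsupp : ∀ x : Rd d, ψ x ≠ 0 → ‖x‖ < 2)
    (ε r C h : ℝ) (hε : 0 < ε) (hr : 0 < r) (hC : 0 < C) (hh : 0 < h)
    (hχhat : ∀ t : Rd d, ‖FT χ t‖ ≤ C * Real.exp (-(2 * N (2 * ‖t‖ / h))))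
    (θ : Rd d → ℂ)
    (hθ : ∀ x : Rd d, θ x = ((ε ^ d : ℝ)⁻¹ : ℂ) * invFT (fun y => (ψ y : ℂ)) (ε⁻¹ • x) * χ (r⁻¹ • x)) :
    ∀ ξ : Rd d, 4 / ε ≤ ‖ξ‖ →
      ‖FT θ ξ‖ ≤ (C * ((2 * Real.pi) ^ d : ℝ)⁻¹ *
          ∫ t : Rd d, Real.exp (-(N (2 * ‖t‖ / h)))) * Real.exp (-(N (r * ‖ξ‖ / h))) := by
  intro ξ hξ
  have hNa : IsAssocFn Np N := isAssocFn_of_pos hN0 hN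
  set F : Rd d → ℝ := fun t => Real.exp (-(N (2 * ‖t‖ / h)))
  have hF : Integrable F := by
    simpa only [F, mul_div_right_comm] using
      hNa.integrable_exp_neg_norm hW volume (c := 2 / h) (by positivity)
  have hψ1 : ∀ x, ‖(ψ x : ℂ)‖ ≤ 1 := fun x => by
    rw [Complex.norm_real, Real.norm_of_nonneg (hψ01 x).1]; exact (hψ01 x).2
  have hψball : ∀ x, (ψ x : ℂ) ≠ 0 → ‖x‖ ≤ 2 := fun x hx =>
    (hψsupp x (Complex.ofReal_ne_zero.1 hx)).le
  have hψ : Integrable fun y => (ψ y : ℂ) :=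
    integrable_of_norm_le_of_support_subset hψm.complex_ofReal.aestronglyMeasurable
      (measure_closedBall_lt_top (x := 0) (r := 2)).ne
      (fun x hx => mem_closedBall_zero_iff.2 (hψball x hx)) hψ1
  obtain rfl : θ = theta (fun y => (ψ y : ℂ)) χ ε r := funext hθ
  calc ‖FT (theta (fun y => (ψ y : ℂ)) χ ε r) ξ‖ ≤ r ^ d / (ε ^ d * (2 * Real.pi) ^ d) *
        ∫ η, C * Real.exp (-N (r * ‖ξ‖ / h)) * F (r • (ξ - ε⁻¹ • η)) := by
        rw [FT_theta hψ hχint ε hr.ne', norm_mul, Complex.norm_real,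
          Real.norm_of_nonneg (by positivity), abs_of_pos (by positivity)]
        gcongr
        exact norm_integral_le_of_norm_le ((((hF.comp_smul hr.ne').comp_sub_left ξ).comp_smul
          (inv_ne_zero hε.ne')).const_mul _) (ae_of_all _ fun η =>
            norm_mul_comp_smul_sub_le (hNa.monotoneOn hW) hC.le hh hχhat hψ1 hψball hε hr hξ η)
    _ = _ := by
        rw [integral_const_mul, integral_comp_smul_sub_smul, finrank_euclideanSpace_fin,
          smul_eq_mul, abs_of_pos (by positivity), mul_pow r, inv_pow]
        field_simp

/-- Decay of the Fourier transform of `θ_ε(x) = ε^{-d} F⁻¹(ψ)(x/ε) χ(x/r_ε)` for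
high frequencies `|ξ| ≥ 4/ε`:  `|θ̂_ε(ξ)| ≤ C' e^{-N(r_ε|ξ|/h)}` with
`C' = C (2π)^{-d} ∫ e^{-N(2|t|/h)} dt`. -/
theorem fourier_theta_highfreq_decay (d : ℕ) (Np : ℕ → ℝ) (hW : WeightSeq Np)
    (h1 : CondM1 Np) (N : ℝ → ℝ) (hN0 : N 0 = 0)
    (hN : ∀ t : ℝ, 0 < t → (N t : EReal) = assocFn Np t)
    (χ : Rd d → ℂ) (hχint : Integrable χ)
    (ψ : Rd d → ℝ) (hψm : Measurable ψ)
    (hψ01 : ∀ x, 0 ≤ ψ x ∧ ψ x ≤ 1)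
    (hψsupp : ∀ x : Rd d, ψ x ≠ 0 → ‖x‖ < 2)
    (ε r C h : ℝ) (hε : 0 < ε) (hr : 0 < r) (hC : 0 < C) (hh : 0 < h)
    (hχhat : ∀ t : Rd d, ‖FT χ t‖ ≤ C * Real.exp (-(2 * N (2 * ‖t‖ / h))))
    (θ : Rd d → ℂ)
    (hθ : ∀ x : Rd d, θ x = ((ε ^ d : ℝ)⁻¹ : ℂ) * invFT (fun y => (ψ y : ℂ)) (ε⁻¹ • x) * χ (r⁻¹ • x)) :
    ∀ ξ : Rd d, 4 / ε ≤ ‖ξ‖ →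
      ‖FT θ ξ‖ ≤ (C * ((2 * Real.pi) ^ d : ℝ)⁻¹ *
          ∫ t : Rd d, Real.exp (-(N (2 * ‖t‖ / h)))) * Real.exp (-(N (r * ‖ξ‖ / h))) :=
  fourier_theta_highfreq_decay_general d Np hW N hN0 hN χ hχint ψ hψm hψ01 hψsupp ε r C h hε hr hC
    hh hχhat θ hθ

end
end

section
/- Let (E,F) be a test pair and T ∈ L(E,E) a continuous linear operator with T|_F ∈ L(F,F). Then the map T^RO : L(E,F) → L(E,F), Φ ↦ T∘Φ − Φ∘T is linear and continuous, and the map T̂ : E(E,F) → E(E,F) defined by (T̂R)(Φ) = T(R(Φ)) − dR(Φ)(T^RO Φ) satisfies T̂ ∘ ι = ι ∘ T and T̂ ∘ σ = σ ∘ (T|_F), where ι(u)(Φ) = Φ(u) and σ(φ)(Φ) = φ. -/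
open Filter Set

noncomputable section

variable {E F : Type*}
  [AddCommGroup E] [Module ℝ E] [TopologicalSpace E]
  [AddCommGroup F] [Module ℝ F] [UniformSpace F] [IsUniformAddGroup F]
  [ContinuousSMul ℝ F] [T2Space F]

abbrev Basic (E F : Type*) [AddCommGroup E] [Module ℝ E] [TopologicalSpace E]
    [AddCommGroup F] [Module ℝ F] [TopologicalSpace F] : Type _ :=
  (E →L[ℝ] F) → F

def iotaMap : E → Basic E F := fun u Φ => Φ u

def sigmaMap : F → Basic E F := fun φ _ => φ

/-- The directional (Gateaux) derivative `dR(Φ)(Ψ)` of a map on `L(E,F)`,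
in the sense of convenient calculus. -/
def dirDeriv (R : Basic E F) (Φ Ψ : E →L[ℝ] F) : F :=
  letI : Nonempty F := ⟨0⟩
  limUnder (nhdsWithin (0 : ℝ) {(0 : ℝ)}ᶜ)
    (fun t : ℝ => t⁻¹ • (R (Φ + t • Ψ) - R Φ))

/-- `T^RO Φ = T∘Φ − Φ∘T` (with `Tf = T|_F`). -/
def TRO (T : E →L[ℝ] E) (Tf : F →L[ℝ] F) : (E →L[ℝ] F) → (E →L[ℝ] F) :=
  fun Φ => Tf.comp Φ - Φ.comp T

/-- `(T̂ R)(Φ) = T(R(Φ)) − dR(Φ)(T^RO Φ)`. -/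
def hatT (T : E →L[ℝ] E) (Tf : F →L[ℝ] F) (R : Basic E F) : Basic E F :=
  fun Φ => Tf (R Φ) - dirDeriv R Φ (TRO T Tf Φ)

theorem dirDeriv_eq_of_add_smul {R : Basic E F} {Φ Ψ : E →L[ℝ] F} {v : F}
    (h : ∀ t : ℝ, R (Φ + t • Ψ) = R Φ + t • v) : dirDeriv R Φ Ψ = v := by
  have quotient_eq : ∀ t ∈ ({0}ᶜ : Set ℝ), t⁻¹ • (R (Φ + t • Ψ) - R Φ) = v := fun t ht => by
    rw [h, add_sub_cancel_left, smul_smul, inv_mul_cancel₀ ht, one_smul]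
  have : Tendsto (fun t : ℝ => t⁻¹ • (R (Φ + t • Ψ) - R Φ)) (nhdsWithin 0 {0}ᶜ) (nhds v) :=
    tendsto_const_nhds.congr' (eventuallyEq_nhdsWithin_of_eqOn quotient_eq).symm
  exact this.limUnder_eq

theorem dirDeriv_iotaMap (u : E) (Φ Ψ : E →L[ℝ] F) : dirDeriv (iotaMap u) Φ Ψ = Ψ u :=
  dirDeriv_eq_of_add_smul fun t => by simp [iotaMap]

theorem dirDeriv_sigmaMap (φ : F) (Φ Ψ : E →L[ℝ] F) : dirDeriv (sigmaMap (E := E) φ) Φ Ψ = 0 :=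
  dirDeriv_eq_of_add_smul fun t => by simp [sigmaMap]

theorem hatT_iotaMap (T : E →L[ℝ] E) (Tf : F →L[ℝ] F) (u : E) (Φ : E →L[ℝ] F) :
    hatT T Tf (iotaMap u) Φ = iotaMap (T u) Φ := by
  simp [hatT, dirDeriv_iotaMap, TRO, iotaMap]

theorem hatT_sigmaMap (T : E →L[ℝ] E) (Tf : F →L[ℝ] F) (φ : F) (Φ : E →L[ℝ] F) :
    hatT T Tf (sigmaMap (E := E) φ) Φ = sigmaMap (Tf φ) Φ := by
  simp [hatT, dirDeriv_sigmaMap, sigmaMap]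

theorem hatT_commutes_general
    (T : E →L[ℝ] E) (Tf : F →L[ℝ] F) :
    IsLinearMap ℝ (TRO (F := F) T Tf) ∧
    Continuous (TRO (F := F) T Tf) ∧
    (∀ (u : E) (Φ : E →L[ℝ] F), hatT T Tf (iotaMap u) Φ = iotaMap (T u) Φ) ∧
    (∀ (φ : F) (Φ : E →L[ℝ] F), hatT T Tf (sigmaMap (E := E) φ) Φ = sigmaMap (Tf φ) Φ) := by
  let L : (E →L[ℝ] F) →L[ℝ] (E →L[ℝ] F) :=
    ContinuousLinearMap.postcomp E Tf - ContinuousLinearMap.precomp F T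
  have TRO_eq : TRO T Tf = ⇑L := rfl
  rw [TRO_eq]
  exact ⟨L.toLinearMap.isLinear, L.continuous, hatT_iotaMap T Tf, hatT_sigmaMap T Tf⟩

/-- For `T ∈ L(E,E)` restricting to `Tf = T|_F ∈ L(F,F)`: the map `T^RO` is linear
and continuous (bounded convergence topologies), and `T̂` satisfies `T̂ ∘ ι = ι ∘ T`
and `T̂ ∘ σ = σ ∘ T|_F` on the basic space. -/
theorem hatT_commutes (j : F →L[ℝ] E) (hj : Function.Injective j)
    (T : E →L[ℝ] E) (Tf : F →L[ℝ] F) (hcompat : ∀ φ : F, j (Tf φ) = T (j φ)) :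
    IsLinearMap ℝ (TRO (F := F) T Tf) ∧
    Continuous (TRO (F := F) T Tf) ∧
    (∀ (u : E) (Φ : E →L[ℝ] F), hatT T Tf (iotaMap u) Φ = iotaMap (T u) Φ) ∧
    (∀ (φ : F) (Φ : E →L[ℝ] F), hatT T Tf (sigmaMap (E := E) φ) Φ = sigmaMap (Tf φ) Φ) :=
  hatT_commutes_general T Tf

end
end
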